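/- arXiv:2602.22504 — 4 statements merged into one kernel-verified Lean document; each statement's English description precedes it below -/
import Mathlib

section
/- Let d_1 = 2a and d_2 = 2b be even numbers, d = 2n = d_1+d_2, let λ_1 be a special symplectic partition of d_1 and λ_2 a special orthogonal partition of d_2. Then W = W(λ_1,λ_2) (type C data) is a symplectic partition of d and D_sp(W) = D_sp(λ_1) + D_o(λ_2) + n(2n+1) − a(2a+1) − b(2b−1). -/
/-- `f` is a partition of `d`: weakly decreasing, finitely many nonzero terms, total sum `d`.
    Indexing is 0-based: `f j` is the `(j+1)`-st part. -/
def IsPartitionOf (f : ℕ → ℕ) (d : ℕ) : Prop :=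
  Antitone f ∧ ∃ N, (∀ j, N ≤ j → f j = 0) ∧ ∑ j ∈ Finset.range N, f j = d

/-- Transpose of a partition (0-based): `ptrans f k` = #{j : f j ≥ k+1}, i.e. `(f^t)_{k+1}`. -/
noncomputable def ptrans (f : ℕ → ℕ) : ℕ → ℕ := fun k => Nat.card {j : ℕ // k + 1 ≤ f j}

/-- Multiplicity of the part `k` in `f` (meaningful for `k > 0`). -/
noncomputable def pmult (f : ℕ → ℕ) (k : ℕ) : ℕ := Nat.card {j : ℕ // f j = k}

/-- Orthogonal: every even positive part occurs with even multiplicity. -/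
def IsOrthogonal (f : ℕ → ℕ) : Prop := ∀ k, 0 < k → Even k → Even (pmult f k)

/-- Symplectic: every odd positive part occurs with even multiplicity. -/
def IsSymplectic (f : ℕ → ℕ) : Prop := ∀ k, 0 < k → Odd k → Even (pmult f k)

/-- Dominance order for ℕ-valued sequences. -/
def NDomLE (f g : ℕ → ℕ) : Prop :=
  ∀ N, ∑ j ∈ Finset.range N, f j ≤ ∑ j ∈ Finset.range N, g j

/-- Dominance order for ℤ-valued sequences. -/
def DomLE (f g : ℕ → ℤ) : Prop :=
  ∀ N, ∑ j ∈ Finset.range N, f j ≤ ∑ j ∈ Finset.range N, g j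

/-- `ν` is the `P`-collapse of `μ` (both of total size `m`): `ν` is a partition of `m`
    satisfying `P`, `ν ≤ μ`, and every partition `σ` of `m` satisfying `P` with `σ ≤ μ`
    satisfies `σ ≤ ν`. -/
def IsCollapse (P : (ℕ → ℕ) → Prop) (m : ℕ) (μ ν : ℕ → ℕ) : Prop :=
  IsPartitionOf ν m ∧ P ν ∧ NDomLE ν μ ∧
    ∀ σ, IsPartitionOf σ m → P σ → NDomLE σ μ → NDomLE σ ν

/-- B-collapse (largest orthogonal partition below `μ`, `m` odd). -/
def IsBCollapse : ℕ → (ℕ → ℕ) → (ℕ → ℕ) → Prop := IsCollapse IsOrthogonal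
/-- C-collapse (largest symplectic partition below `μ`, `m` even). -/
def IsCCollapse : ℕ → (ℕ → ℕ) → (ℕ → ℕ) → Prop := IsCollapse IsSymplectic
/-- D-collapse (largest orthogonal partition below `μ`, `m` even). -/
def IsDCollapse : ℕ → (ℕ → ℕ) → (ℕ → ℕ) → Prop := IsCollapse IsOrthogonal

/-- `μ^−` : decrease the smallest nonzero part by 1. -/
def minusOne (f : ℕ → ℕ) : ℕ → ℕ :=
  fun j => if 0 < f j ∧ f (j+1) = 0 then f j - 1 else f j

/-- `μ^+` : increase the largest part by 1. -/
def plusOne (f : ℕ → ℕ) : ℕ → ℕ := fun j => if j = 0 then f 0 + 1 else f j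

/-- `u = f ∪ g` : `u` is weakly decreasing, finitely supported, and every positive
    part occurs in `u` with multiplicity the sum of its multiplicities in `f` and `g`. -/
def IsUnionOf (u f g : ℕ → ℕ) : Prop :=
  Antitone u ∧ (∃ N, ∀ j, N ≤ j → u j = 0) ∧
    ∀ k, 0 < k → pmult u k = pmult f k + pmult g k

/-- The sequence ξ attached to `(f, g, ε₁, ε₂, d)`.  Index `j` here corresponds to the
    1-based index `j+1` of the paper. -/
def xiSeq (f g : ℕ → ℕ) (e1 e2 d : ℕ) : ℕ → ℤ := fun j =>
  if (j + 1) % 2 = (d + 1) % 2 ∧ f j % 2 = e1 ∧ g j % 2 = e2 ∧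
      (j = 0 ∨ f j + g j < f (j - 1) + g (j - 1)) then 1
  else if (j + 1) % 2 = d % 2 ∧ f j % 2 = e1 ∧ g j % 2 = e2 ∧
      f (j + 1) + g (j + 1) < f j + g j then -1
  else 0

/-- The Waldspurger sequence `W(f,g) = f + g + ξ` (ℤ-valued a priori). -/
def wald (f g : ℕ → ℕ) (e1 e2 d : ℕ) : ℕ → ℤ :=
  fun j => (f j : ℤ) + (g j : ℤ) + xiSeq f g e1 e2 d j

/-- Sum of squares of the transpose parts: `Σ_k ((λᵗ)_k)²` (k ranges over 1,…,λ₁). -/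
noncomputable def sumSqTrans (f : ℕ → ℕ) : ℕ := ∑ k ∈ Finset.range (f 0), (ptrans f k)^2

/-- Number of odd parts `#{j : λ_j odd}`. -/
noncomputable def oddCount (f : ℕ → ℕ) : ℕ := Nat.card {j : ℕ // Odd (f j)}

/-- `D_o(λ) = N(N−1)/2 − (Σ_k ((λᵗ)_k)² − #{odd parts})/2`, the dimension of the
nilpotent orbit of Jordan type `λ` in `so_N`. -/
noncomputable def Dorth (f : ℕ → ℕ) (N : ℕ) : ℚ :=
  (N : ℚ) * ((N : ℚ) - 1) / 2 - ((sumSqTrans f : ℚ) - (oddCount f : ℚ)) / 2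

/-- `D_sp(λ) = n(2n+1) − (Σ_k ((λᵗ)_k)² + #{odd parts})/2`, the dimension of the
nilpotent orbit of Jordan type `λ` in `sp_{2n}`. -/
noncomputable def Dsymp (f : ℕ → ℕ) (n : ℕ) : ℚ :=
  (n : ℚ) * (2 * (n : ℚ) + 1) - ((sumSqTrans f : ℚ) + (oddCount f : ℚ)) / 2

/-!
Since `ptrans λ₁` and `ptrans λ₂` are symplectic, the parts in positions `2i` and `2i+1` of each
partition have equal parity, so `ξ` can only be nonzero on whole pairs where `λ₁` is even and `λ₂`
is odd. On such a pair, `ξ (2i)` is `1` unless position `2i` ties with the previous position, and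
`ξ (2i+1)` is `-1` unless it ties with the next one; hence `ξ` and the correction term
`dimCorrection` of the dimension telescope over pairs, with the ties (`tie`) as potential. This
gives `|W| = |λ₁| + |λ₂|` and, through `Σ_k ((λᵗ)_k)² = Σ_j (2j+1) λ_j`, the dimension formula.

An odd part `k` of `W` comes from a block of positions where `λ₁ + λ₂ = k` and `ξ = 0`. If `λ₁` is
even and `λ₂` odd on the block, `ξ` removes exactly the ends of the block that would make it start
or stop at an even index, leaving an interval between two odd indices. If `λ₁` is odd and `λ₂` even,
`ξ = 0` on the block, whose ends are descents of `λ₁` next to an odd part or of `λ₂` next to an even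
part; such descents sit at even indices because those parts have even multiplicity.
-/

open Finset

section Transpose

variable {f : ℕ → ℕ} {N : ℕ}

theorem lt_ptrans_iff (hf : Antitone f) (hN : ∀ j, N ≤ j → f j = 0) {c j : ℕ} :
    j < ptrans f c ↔ c < f j := by
  classical
  have hex : ∃ m, f m ≤ c := ⟨N, by simp [hN N le_rfl]⟩
  have hset : {j | c < f j} = Set.Iio (Nat.find hex) := by
    ext j
    simp only [Set.mem_ofPred_eq, Set.mem_Iio]
    refine ⟨fun h => lt_of_not_ge fun hj => ?_, fun hj => lt_of_not_ge (Nat.find_min hex hj)⟩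
    exact ((hf hj).trans (Nat.find_spec hex)).not_gt h
  have hcard : ptrans f c = Nat.find hex := by
    rw [← Set.ncard_Iio_nat (Nat.find hex), ← hset]
    rfl
  rw [hcard, ← Set.mem_Iio, ← hset, Set.mem_ofPred_eq]

theorem ptrans_eq_succ (hf : Antitone f) (hN : ∀ j, N ≤ j → f j = 0) {c j : ℕ}
    (hle : f (j + 1) ≤ c) (hlt : c < f j) : ptrans f c = j + 1 := by
  have h1 := (lt_ptrans_iff hf hN (c := c) (j := j)).mpr hlt
  have h2 := mt (lt_ptrans_iff hf hN (c := c) (j := j + 1)).mp (not_lt.mpr hle)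
  omega

theorem setOf_eq_eq_Ico (hf : Antitone f) (hN : ∀ j, N ≤ j → f j = 0) {k : ℕ} (hk : 0 < k) :
    {j | f j = k} = Set.Ico (ptrans f k) (ptrans f (k - 1)) := by
  ext j
  have h1 := lt_ptrans_iff hf hN (c := k) (j := j)
  have h2 := lt_ptrans_iff hf hN (c := k - 1) (j := j)
  simp only [Set.mem_ofPred_eq, Set.mem_Ico]
  omega

theorem pmult_eq_sub (hf : Antitone f) (hN : ∀ j, N ≤ j → f j = 0) {k : ℕ} (hk : 0 < k) :
    pmult f k = ptrans f (k - 1) - ptrans f k := by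
  change Set.ncard {j | f j = k} = _
  rw [setOf_eq_eq_Ico hf hN hk, Set.ncard_Ico_nat]

theorem pmult_ptrans_eq_sub (hf : Antitone f) (hN : ∀ j, N ≤ j → f j = 0) {k : ℕ} (hk : 0 < k) :
    pmult (ptrans f) k = f (k - 1) - f k := by
  have hset : {c | ptrans f c = k} = Set.Ico (f k) (f (k - 1)) := by
    ext c
    have h1 := lt_ptrans_iff hf hN (c := c) (j := k)
    have h2 := lt_ptrans_iff hf hN (c := c) (j := k - 1)
    simp only [Set.mem_ofPred_eq, Set.mem_Ico]
    omega
  change Set.ncard {c | ptrans f c = k} = _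
  rw [hset, Set.ncard_Ico_nat]

theorem mod_two_eq_of_isSymplectic_ptrans (hf : Antitone f) (hN : ∀ j, N ≤ j → f j = 0)
    (h : IsSymplectic (ptrans f)) (i : ℕ) : f (2 * i) % 2 = f (2 * i + 1) % 2 := by
  have hmult := h (2 * i + 1) (by omega) (odd_two_mul_add_one i)
  rw [pmult_ptrans_eq_sub hf hN (by omega), Nat.add_sub_cancel,
    Nat.even_sub (hf (by omega : 2 * i ≤ 2 * i + 1)), Nat.even_iff, Nat.even_iff] at hmult
  omega

theorem even_succ_of_lt (hf : Antitone f) (hN : ∀ j, N ≤ j → f j = 0)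
    (pp : ∀ i, f (2 * i) % 2 = f (2 * i + 1) % 2) {ε : ℕ}
    (hm : ∀ k, 0 < k → k % 2 = ε → Even (pmult f k)) {j : ℕ} (hlt : f (j + 1) < f j)
    (hpar : f (j + 1) % 2 = ε ∨ f j % 2 = ε) : Even (j + 1) := by
  induction j using Nat.strong_induction_on with
  | _ j ih =>
  by_cases hj : f j % 2 = ε
  · -- `j + 1` ends the block of parts equal to `f j`, which starts at `u`
    set u := ptrans f (f j) with hu
    have hend : ptrans f (f j - 1) = j + 1 := ptrans_eq_succ hf hN (by omega) (by omega)
    have huj : u ≤ j := not_lt.mp fun h => lt_irrefl _ ((lt_ptrans_iff hf hN).mp h)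
    have hmult := hm (f j) (by omega) hj
    rw [pmult_eq_sub hf hN (by omega), hend, ← hu] at hmult
    have hue : Even u := by
      rcases Nat.eq_zero_or_eq_succ_pred u with h0 | hv
      · exact h0 ▸ Even.zero
      · set v := u.pred
        have hv1 : f j < f v := (lt_ptrans_iff hf hN).mp (by omega)
        have hv2 : f (v + 1) ≤ f j := not_lt.mp fun h => by
          have := (lt_ptrans_iff hf hN).mpr h; omega
        have hv3 : f j ≤ f (v + 1) := hf (by omega)
        rw [hv]
        exact ih v (by omega) (by omega) (Or.inl (by rw [le_antisymm hv2 hv3, hj]))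
    have := (Nat.even_sub (by omega : u ≤ j + 1)).mp hmult
    exact this.mpr hue
  · -- the parities of `f j` and `f (j + 1)` differ, so `j` and `j + 1` lie in different pairs
    have hj1 : f (j + 1) % 2 = ε := hpar.resolve_right hj
    rcases Nat.even_or_odd j with ⟨i, hi⟩ | hodd
    · exact absurd (pp i) (by rw [show 2 * i = j by omega]; omega)
    · exact hodd.add_one

theorem sum_range_two_mul_add_one (m : ℕ) : ∑ j ∈ range m, (2 * j + 1) = m ^ 2 := by
  induction m with
  | zero => simp
  | succ m ih => rw [sum_range_succ, ih]; ring

theorem sumSqTrans_eq_sum (hf : Antitone f) (hN : ∀ j, N ≤ j → f j = 0) :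
    sumSqTrans f = ∑ j ∈ range N, (2 * j + 1) * f j := by
  have hrow : ∀ k, ptrans f k ^ 2 = ∑ j ∈ range N, if k < f j then 2 * j + 1 else 0 := by
    intro k
    rw [← sum_filter, ← sum_range_two_mul_add_one]
    congr 1
    ext j
    simp only [mem_range, mem_filter, lt_ptrans_iff hf hN]
    exact ⟨fun h => ⟨not_le.mp fun hj => by simp [hN j hj] at h, h⟩, And.right⟩
  have hcol : ∀ j, (range (f 0)).filter (· < f j) = range (f j) := by
    intro j
    ext k
    simp only [mem_filter, mem_range]
    exact ⟨And.right, fun h => ⟨h.trans_le (hf (Nat.zero_le j)), h⟩⟩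
  rw [sumSqTrans, sum_congr rfl fun k _ => hrow k, sum_comm]
  refine sum_congr rfl fun j _ => ?_
  rw [← sum_filter, hcol j, sum_const, card_range, smul_eq_mul, mul_comm]

theorem oddCount_eq_sum (hN : ∀ j, N ≤ j → f j = 0) :
    oddCount f = ∑ j ∈ range N, f j % 2 := by
  have hset : {j | Odd (f j)} = ↑((range N).filter fun j => f j % 2 = 1) := by
    ext j
    simp only [Set.mem_ofPred_eq, coe_filter, mem_range, Nat.odd_iff]
    exact ⟨fun h => ⟨not_le.mp fun hj => by simp [hN j hj] at h, h⟩, And.right⟩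
  change Set.ncard {j | Odd (f j)} = _
  rw [hset, Set.ncard_coe_finset, card_filter]
  exact sum_congr rfl fun j _ => by split_ifs <;> omega

end Transpose

section Waldspurger

variable {f g : ℕ → ℕ} {N : ℕ}

theorem xiSeq_of_even {e1 e2 d : ℕ} (hd : Even d) : xiSeq f g e1 e2 d = xiSeq f g e1 e2 0 := by
  have := Nat.even_iff.mp hd
  funext j
  unfold xiSeq
  split_ifs <;> omega

def xiC (f g : ℕ → ℕ) : ℕ → ℤ := xiSeq f g 0 1 0

def waldC (f g : ℕ → ℕ) (j : ℕ) : ℕ := ((f j : ℤ) + g j + xiC f g j).toNat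

theorem natCast_waldC (j : ℕ) : (waldC f g j : ℤ) = f j + g j + xiC f g j := by
  refine Int.toNat_of_nonneg ?_
  unfold xiC xiSeq
  split_ifs <;> omega

theorem wald_eq_waldC {d : ℕ} (hd : Even d) (j : ℕ) : wald f g 0 1 d j = waldC f g j := by
  rw [natCast_waldC, wald, xiSeq_of_even hd, xiC]

theorem xiC_eq_zero_of_not_mod_two (h : ¬ (f j % 2 = 0 ∧ g j % 2 = 1)) : xiC f g j = 0 := by
  unfold xiC xiSeq
  split_ifs <;> tauto

theorem waldC_antitone (hf : Antitone f) (hg : Antitone g) : Antitone (waldC f g) := by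
  refine antitone_nat_of_succ_le fun j => ?_
  have h1 := hf (by omega : j ≤ j + 1)
  have h2 := hg (by omega : j ≤ j + 1)
  have h3 := hf (by omega : j + 1 ≤ j + 1 + 1)
  have h4 := hg (by omega : j + 1 ≤ j + 1 + 1)
  have e1 := natCast_waldC (f := f) (g := g) j
  have e2 := natCast_waldC (f := f) (g := g) (j + 1)
  unfold xiC xiSeq at e1 e2
  simp only [Nat.add_sub_cancel, Nat.add_one_ne_zero, false_or] at e2
  split_ifs at e1 e2 <;> omega

def mark (f g : ℕ → ℕ) (j : ℕ) : ℤ := if f j % 2 = 0 ∧ g j % 2 = 1 then 1 else 0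

def tie (f g : ℕ → ℕ) : ℕ → ℤ
  | 0 => 0
  | i + 1 => if f (2 * i + 1) % 2 = 0 ∧ g (2 * i + 1) % 2 = 1 ∧
      f (2 * i + 2) + g (2 * i + 2) = f (2 * i + 1) + g (2 * i + 1) then 1 else 0

theorem xiC_two_mul (hf : Antitone f) (hg : Antitone g) (i : ℕ) :
    xiC f g (2 * i) = mark f g (2 * i) - tie f g i := by
  rcases i with _ | i
  · simp [xiC, xiSeq, mark, tie]
  · have h1 := hf (by omega : 2 * i + 1 ≤ 2 * (i + 1))
    have h2 := hg (by omega : 2 * i + 1 ≤ 2 * (i + 1))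
    simp only [xiC, xiSeq, mark, tie, show 2 * (i + 1) = 2 * i + 2 by omega,
      show 2 * i + 2 - 1 = 2 * i + 1 by omega, show 2 * i + 2 ≠ 0 by omega, false_or] at *
    split_ifs <;> omega

theorem xiC_two_mul_add_one (hf : Antitone f) (hg : Antitone g) (i : ℕ) :
    xiC f g (2 * i + 1) = tie f g (i + 1) - mark f g (2 * i + 1) := by
  have h1 := hf (by omega : 2 * i + 1 ≤ 2 * i + 2)
  have h2 := hg (by omega : 2 * i + 1 ≤ 2 * i + 2)
  simp only [xiC, xiSeq, mark, tie, show 2 * i + 1 + 1 = 2 * i + 2 by omega]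
  split_ifs <;> omega

theorem mark_two_mul_add_one (pf : ∀ i, f (2 * i) % 2 = f (2 * i + 1) % 2)
    (pg : ∀ i, g (2 * i) % 2 = g (2 * i + 1) % 2) (i : ℕ) :
    mark f g (2 * i + 1) = mark f g (2 * i) := by
  simp only [mark, pf i, pg i]

theorem tie_eq_zero (hg : g (2 * N - 1) = 0) : tie f g N = 0 := by
  rcases N with _ | N
  · rfl
  · have : g (2 * N + 1) = 0 := by simpa [Nat.mul_succ] using hg
    simp [tie, this]

theorem waldC_eq_zero (hNf : ∀ j, N ≤ j → f j = 0) (hNg : ∀ j, N ≤ j → g j = 0) {j : ℕ}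
    (hj : N ≤ j) : waldC f g j = 0 := by
  have := natCast_waldC (f := f) (g := g) j
  rw [xiC_eq_zero_of_not_mod_two (by simp [hNg j hj]), hNf j hj, hNg j hj] at this
  omega

theorem xiC_two_mul_nonneg (i : ℕ) : 0 ≤ xiC f g (2 * i) := by
  unfold xiC xiSeq
  split_ifs <;> omega

theorem xiC_two_mul_add_one_nonpos (i : ℕ) : xiC f g (2 * i + 1) ≤ 0 := by
  unfold xiC xiSeq
  split_ifs <;> omega

theorem sum_range_two_mul_eq_sub {M : Type*} [AddCommGroup M] {u G : ℕ → M}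
    (h : ∀ i, u (2 * i) + u (2 * i + 1) = G (i + 1) - G i) (n : ℕ) :
    ∑ j ∈ range (2 * n), u j = G n - G 0 := by
  induction n with
  | zero => simp
  | succ n ih =>
    rw [show 2 * (n + 1) = 2 * n + 1 + 1 by ring, sum_range_succ, sum_range_succ, add_assoc, ih, h]
    abel

theorem sum_range_xiC (hf : Antitone f) (hg : Antitone g)
    (pf : ∀ i, f (2 * i) % 2 = f (2 * i + 1) % 2) (pg : ∀ i, g (2 * i) % 2 = g (2 * i + 1) % 2)
    (hNg : ∀ j, N ≤ j → g j = 0) : ∑ j ∈ range (2 * N), xiC f g j = 0 := by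
  rw [sum_range_two_mul_eq_sub (G := tie f g) fun i => by
    rw [xiC_two_mul hf hg, xiC_two_mul_add_one hf hg, mark_two_mul_add_one pf pg]; ring]
  rw [tie_eq_zero (hNg _ (by omega))]
  rfl

def dimCorrection (f g : ℕ → ℕ) (j : ℕ) : ℤ :=
  (2 * j + 1) * xiC f g j + 2 * mark f g j - |xiC f g j|

theorem mul_waldC_add_mod_two_eq (j : ℕ) :
    (2 * j + 1) * (waldC f g j : ℤ) + (waldC f g j % 2 : ℕ) + (g j % 2 : ℕ)
      = (2 * j + 1) * ((f j : ℤ) + g j) + (f j % 2 : ℕ) + dimCorrection f g j := by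
  have e := natCast_waldC (f := f) (g := g) j
  have hpar : ((waldC f g j % 2 : ℕ) : ℤ) + (g j % 2 : ℕ)
      = (f j % 2 : ℕ) + 2 * mark f g j - |xiC f g j| := by
    rw [Int.natCast_mod, e]
    unfold mark xiC xiSeq
    split_ifs <;> norm_num <;> omega
  rw [dimCorrection]
  linear_combination (2 * (j : ℤ) + 1) * e + hpar

theorem dimCorrection_two_mul (hf : Antitone f) (hg : Antitone g) (i : ℕ) :
    dimCorrection f g (2 * i) = (4 * i + 2) * mark f g (2 * i) - 4 * i * tie f g i := by
  rw [dimCorrection, abs_of_nonneg (xiC_two_mul_nonneg i), xiC_two_mul hf hg]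
  push_cast
  ring

theorem dimCorrection_two_mul_add_one (hf : Antitone f) (hg : Antitone g) (i : ℕ) :
    dimCorrection f g (2 * i + 1)
      = 4 * (i + 1) * tie f g (i + 1) - (4 * i + 2) * mark f g (2 * i + 1) := by
  rw [dimCorrection, abs_of_nonpos (xiC_two_mul_add_one_nonpos i), xiC_two_mul_add_one hf hg]
  push_cast
  ring

theorem sum_range_dimCorrection (hf : Antitone f) (hg : Antitone g)
    (pf : ∀ i, f (2 * i) % 2 = f (2 * i + 1) % 2) (pg : ∀ i, g (2 * i) % 2 = g (2 * i + 1) % 2)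
    (hNg : ∀ j, N ≤ j → g j = 0) : ∑ j ∈ range (2 * N), dimCorrection f g j = 0 := by
  rw [sum_range_two_mul_eq_sub (G := fun p => 4 * (p : ℤ) * tie f g p) fun i => by
    rw [dimCorrection_two_mul hf hg, dimCorrection_two_mul_add_one hf hg,
      mark_two_mul_add_one pf pg]
    push_cast
    ring]
  simp [tie_eq_zero (f := f) (hNg _ (by omega : N ≤ 2 * N - 1))]

theorem waldC_eq_iff_of_odd {k j : ℕ} (hk : k % 2 = 1) :
    waldC f g j = k ↔ f j + g j = k ∧ xiC f g j = 0 := by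
  have e := natCast_waldC (f := f) (g := g) j
  unfold xiC xiSeq at e ⊢
  split_ifs at e ⊢ <;> grind

theorem eq_and_eq_of_add_eq (hf : Antitone f) (hg : Antitone g) {i j : ℕ} (hij : i ≤ j)
    (h : f j + g j = f i + g i) : f j = f i ∧ g j = g i := by
  have := hf hij
  have := hg hij
  omega

/-- On a block `[α, β)` of equal values of `f + g` with `f` even and `g` odd, `ξ` is `1` at `α`
if `α` is even and `-1` at `β - 1` if `β - 1` is odd, and `0` elsewhere. -/
theorem setOf_xiC_eq_zero_of_block (hf : Antitone f) (hg : Antitone g) {k α β : ℕ}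
    (hrun : ∀ j, f j + g j = k ↔ α ≤ j ∧ j < β) (hαβ : α < β)
    (hpar : f α % 2 = 0 ∧ g α % 2 = 1) :
    {j | f j + g j = k ∧ xiC f g j = 0} = Set.Ico (α + 1 - α % 2) (β + β % 2 - 1) := by
  ext j
  simp only [Set.mem_ofPred_eq, Set.mem_Ico, hrun j]
  by_cases hj : α ≤ j ∧ j < β
  · obtain ⟨hfj, hgj⟩ := eq_and_eq_of_add_eq hf hg hj.1
      (by rw [(hrun j).mpr hj, (hrun α).mpr ⟨le_rfl, hαβ⟩])
    have hp := hrun (j - 1)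
    have hn := hrun (j + 1)
    have h1 := hf (Nat.sub_le j 1)
    have h2 := hg (Nat.sub_le j 1)
    have h3 := hf (by omega : j ≤ j + 1)
    have h4 := hg (by omega : j ≤ j + 1)
    unfold xiC xiSeq
    split_ifs <;> grind
  · omega

theorem even_succ_of_add_lt (hf : Antitone f) (hg : Antitone g) (hNf : ∀ j, N ≤ j → f j = 0)
    (hNg : ∀ j, N ≤ j → g j = 0) (pf : ∀ i, f (2 * i) % 2 = f (2 * i + 1) % 2)
    (pg : ∀ i, g (2 * i) % 2 = g (2 * i + 1) % 2) (hfs : IsSymplectic f) (hgo : IsOrthogonal g)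
    {j : ℕ} (hlt : f (j + 1) + g (j + 1) < f j + g j)
    (hpar : (f (j + 1) % 2 = 1 ∧ g (j + 1) % 2 = 0) ∨ (f j % 2 = 1 ∧ g j % 2 = 0)) :
    Even (j + 1) := by
  rcases lt_or_ge (f (j + 1)) (f j) with h | h
  · exact even_succ_of_lt hf hNf pf (fun k hk h => hfs k hk (Nat.odd_iff.mpr h)) h
      (hpar.imp And.left And.left)
  · exact even_succ_of_lt hg hNg pg (fun k hk h => hgo k hk (Nat.even_iff.mpr h)) (by omega)
      (hpar.imp And.right And.right)

/-- On a block `[α, β)` of equal values of `f + g` with `f` odd and `g` even, `ξ` vanishes and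
both ends of the block are even. -/
theorem even_ncard_setOf_xiC_eq_zero_of_block (hf : Antitone f) (hg : Antitone g)
    (hNf : ∀ j, N ≤ j → f j = 0) (hNg : ∀ j, N ≤ j → g j = 0)
    (pf : ∀ i, f (2 * i) % 2 = f (2 * i + 1) % 2) (pg : ∀ i, g (2 * i) % 2 = g (2 * i + 1) % 2)
    (hfs : IsSymplectic f) (hgo : IsOrthogonal g) {k α β : ℕ}
    (hrun : ∀ j, f j + g j = k ↔ α ≤ j ∧ j < β) (hαβ : α < β)
    (hpar : f α % 2 = 1 ∧ g α % 2 = 0) :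
    Even {j | f j + g j = k ∧ xiC f g j = 0}.ncard := by
  have hconst : ∀ j, α ≤ j → j < β → f j = f α ∧ g j = g α := fun j h1 h2 =>
    eq_and_eq_of_add_eq hf hg h1 (by rw [(hrun j).mpr ⟨h1, h2⟩, (hrun α).mpr ⟨le_rfl, hαβ⟩])
  have hset : {j | f j + g j = k ∧ xiC f g j = 0} = Set.Ico α β := by
    ext j
    simp only [Set.mem_ofPred_eq, Set.mem_Ico, hrun j, and_iff_left_iff_imp]
    intro hj
    exact xiC_eq_zero_of_not_mod_two (by have := hconst j hj.1 hj.2; omega)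
  have hα : Even α := by
    rcases Nat.eq_zero_or_pos α with h0 | hpos
    · exact h0 ▸ Even.zero
    obtain ⟨a, rfl⟩ : ∃ a, α = a + 1 := ⟨α - 1, by omega⟩
    have hs := (hrun a).not.mpr (by omega)
    have hk := (hrun (a + 1)).mpr ⟨le_rfl, hαβ⟩
    have h1 := hf (by omega : a ≤ a + 1)
    have h2 := hg (by omega : a ≤ a + 1)
    exact even_succ_of_add_lt hf hg hNf hNg pf pg hfs hgo (by omega) (Or.inl hpar)
  have hβ : Even β := by
    obtain ⟨b, rfl⟩ : ∃ b, β = b + 1 := ⟨β - 1, by omega⟩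
    have hs := (hrun (b + 1)).not.mpr (by omega)
    have hk := (hrun b).mpr ⟨by omega, by omega⟩
    have h1 := hf (by omega : b ≤ b + 1)
    have h2 := hg (by omega : b ≤ b + 1)
    have hb := hconst b (by omega) (by omega)
    exact even_succ_of_add_lt hf hg hNf hNg pf pg hfs hgo (by omega) (Or.inr (by omega))
  rw [hset, Set.ncard_Ico_nat]
  exact (Nat.even_sub hαβ.le).mpr (iff_of_true hβ hα)

theorem isSymplectic_waldC (hf : Antitone f) (hg : Antitone g) (hNf : ∀ j, N ≤ j → f j = 0)
    (hNg : ∀ j, N ≤ j → g j = 0) (pf : ∀ i, f (2 * i) % 2 = f (2 * i + 1) % 2)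
    (pg : ∀ i, g (2 * i) % 2 = g (2 * i + 1) % 2) (hfs : IsSymplectic f) (hgo : IsOrthogonal g) :
    IsSymplectic (waldC f g) := by
  intro k hk hodd
  have hblock := setOf_eq_eq_Ico (hf.add hg) (N := N) (fun j hj => by simp [hNf j hj, hNg j hj]) hk
  set α := ptrans (f + g) k
  set β := ptrans (f + g) (k - 1)
  have hrun : ∀ j, f j + g j = k ↔ α ≤ j ∧ j < β := fun j => Set.ext_iff.mp hblock j
  have hk2 := Nat.odd_iff.mp hodd
  change Even {j | waldC f g j = k}.ncard
  rw [Set.ext fun j => waldC_eq_iff_of_odd hk2]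
  rcases le_or_gt β α with hβα | hαβ
  · have hempty : {j | f j + g j = k ∧ xiC f g j = 0} = ∅ :=
      Set.eq_empty_of_forall_notMem fun j hj => by have := (hrun j).mp hj.1; omega
    rw [hempty, Set.ncard_empty]
    exact Even.zero
  have hα : f α + g α = k := (hrun α).mpr ⟨le_rfl, hαβ⟩
  rcases (by omega : (f α % 2 = 0 ∧ g α % 2 = 1) ∨ (f α % 2 = 1 ∧ g α % 2 = 0)) with hP | hB
  · rw [setOf_xiC_eq_zero_of_block hf hg hrun hαβ hP, Set.ncard_Ico_nat, Nat.even_iff]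
    omega
  · exact even_ncard_setOf_xiC_eq_zero_of_block hf hg hNf hNg pf pg hfs hgo hrun hαβ hB

theorem IsPartitionOf.sum_range_eq {d : ℕ} (h : IsPartitionOf f d) (hN : ∀ j, N ≤ j → f j = 0) :
    ∑ j ∈ range N, f j = d := by
  obtain ⟨-, M, hM, rfl⟩ := h
  rw [← eventually_constant_sum hN (Nat.le_add_right N M),
    eventually_constant_sum hM (Nat.le_add_left M N)]

theorem isPartitionOf_waldC {d₁ d₂ : ℕ} (h₁ : IsPartitionOf f d₁) (h₂ : IsPartitionOf g d₂)
    (hNf : ∀ j, N ≤ j → f j = 0) (hNg : ∀ j, N ≤ j → g j = 0)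
    (pf : ∀ i, f (2 * i) % 2 = f (2 * i + 1) % 2) (pg : ∀ i, g (2 * i) % 2 = g (2 * i + 1) % 2) :
    IsPartitionOf (waldC f g) (d₁ + d₂) := by
  refine ⟨waldC_antitone h₁.1 h₂.1, 2 * N, fun j hj => waldC_eq_zero hNf hNg (by omega), ?_⟩
  have hsum₁ := h₁.sum_range_eq fun j (hj : 2 * N ≤ j) => hNf j (by omega)
  have hsum₂ := h₂.sum_range_eq fun j (hj : 2 * N ≤ j) => hNg j (by omega)
  zify at hsum₁ hsum₂ ⊢
  simp only [natCast_waldC, sum_add_distrib, sum_range_xiC h₁.1 h₂.1 pf pg hNg, hsum₁, hsum₂,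
    add_zero]

theorem sumSqTrans_waldC_add_oddCount (hf : Antitone f) (hg : Antitone g)
    (hNf : ∀ j, N ≤ j → f j = 0) (hNg : ∀ j, N ≤ j → g j = 0)
    (pf : ∀ i, f (2 * i) % 2 = f (2 * i + 1) % 2) (pg : ∀ i, g (2 * i) % 2 = g (2 * i + 1) % 2) :
    sumSqTrans (waldC f g) + oddCount (waldC f g) + oddCount g
      = sumSqTrans f + sumSqTrans g + oddCount f := by
  have hNf' : ∀ j, 2 * N ≤ j → f j = 0 := fun j hj => hNf j (by omega)
  have hNg' : ∀ j, 2 * N ≤ j → g j = 0 := fun j hj => hNg j (by omega)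
  have hNw : ∀ j, 2 * N ≤ j → waldC f g j = 0 := fun j hj => waldC_eq_zero hNf hNg (by omega)
  have hrows := sum_congr rfl fun j (_ : j ∈ range (2 * N)) =>
    mul_waldC_add_mod_two_eq (f := f) (g := g) j
  simp only [sum_add_distrib, mul_add, sum_range_dimCorrection hf hg pf pg hNg, add_zero] at hrows
  rw [sumSqTrans_eq_sum (waldC_antitone hf hg) hNw, sumSqTrans_eq_sum hf hNf',
    sumSqTrans_eq_sum hg hNg', oddCount_eq_sum hNw, oddCount_eq_sum hNf', oddCount_eq_sum hNg']
  exact_mod_cast hrows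

end Waldspurger

/-- type C dimension.  `d₁ = 2a`, `d₂ = 2b`, `d = 2n = d₁+d₂`, `λ₁` special
symplectic of `d₁`, `λ₂` special orthogonal of `d₂`.  Then `W = W(λ₁,λ₂)` (ε₁=0, ε₂=1) is
a symplectic partition of `d` and
`D_sp(W) = D_sp(λ₁) + D_o(λ₂) + n(2n+1) − a(2a+1) − b(2b−1)`. -/
theorem stmt4 (a b : ℕ) (lam1 lam2 : ℕ → ℕ)
    (h1 : IsPartitionOf lam1 (2*a)) (h1sp : IsSymplectic lam1)
    (h1s : IsSymplectic (ptrans lam1))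
    (h2 : IsPartitionOf lam2 (2*b)) (h2o : IsOrthogonal lam2)
    (h2s : IsSymplectic (ptrans lam2)) :
    ∃ w : ℕ → ℕ, (∀ j, (w j : ℤ) = wald lam1 lam2 0 1 (2*a+2*b) j) ∧
      IsPartitionOf w (2*a+2*b) ∧ IsSymplectic w ∧
      Dsymp w (a+b)
        = Dsymp lam1 a + Dorth lam2 (2*b)
          + (((a+b : ℕ) : ℚ) * (2 * ((a+b : ℕ) : ℚ) + 1)
             - (a : ℚ) * (2 * (a : ℚ) + 1)
             - (b : ℚ) * (2 * (b : ℚ) - 1)) := by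
  obtain ⟨N₁, hN₁, -⟩ := h1.2
  obtain ⟨N₂, hN₂, -⟩ := h2.2
  have hNf : ∀ j, N₁ + N₂ ≤ j → lam1 j = 0 := fun j hj => hN₁ j (by omega)
  have hNg : ∀ j, N₁ + N₂ ≤ j → lam2 j = 0 := fun j hj => hN₂ j (by omega)
  have pf := mod_two_eq_of_isSymplectic_ptrans h1.1 hNf h1s
  have pg := mod_two_eq_of_isSymplectic_ptrans h2.1 hNg h2s
  refine ⟨waldC lam1 lam2, fun j => (wald_eq_waldC ⟨a + b, by ring⟩ j).symm,
    isPartitionOf_waldC h1 h2 hNf hNg pf pg,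
    isSymplectic_waldC h1.1 h2.1 hNf hNg pf pg h1sp h2o, ?_⟩
  have hdim : (sumSqTrans (waldC lam1 lam2) + oddCount (waldC lam1 lam2) + oddCount lam2 : ℚ)
      = sumSqTrans lam1 + sumSqTrans lam2 + oddCount lam1 := by
    exact_mod_cast sumSqTrans_waldC_add_oddCount h1.1 h2.1 hNf hNg pf pg
  simp only [Dsymp, Dorth]
  push_cast
  linear_combination (-1 / 2 : ℚ) * hdim
end

section
/- Let d_1, d_2 be odd numbers and d = d_1+d_2−1. Let λ_1, λ_1' be special orthogonal partitions of d_1 and λ_2, λ_2' special orthogonal partitions of d_2, and suppose λ_1 ≤ λ_1' and λ_2 ≤ λ_2' in dominance order. Then W(λ_1,λ_2) ≤ W(λ_1',λ_2') in dominance order, where both Waldspurger sequences are formed with the type B data. -/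
open Finset

section Transpose

variable {f : ℕ → ℕ}

lemma lt_ptrans_iff_s6 (hf : Antitone f) (hzero : ∃ N, f N = 0) (k i : ℕ) :
    i < ptrans f k ↔ k + 1 ≤ f i := by
  classical
  have hex : ∃ m, f m < k + 1 := hzero.imp fun _ h => by omega
  have hset : {j | k + 1 ≤ f j} = Set.Iio (Nat.find hex) := by
    ext j
    simp only [Set.mem_ofPred_eq, Set.mem_Iio, Nat.lt_find_iff, not_lt]
    exact ⟨fun h m hm => h.trans (hf hm), fun h => h j le_rfl⟩
  have hcard : ptrans f k = Nat.find hex := by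
    rw [ptrans, ← Set.coe_ofPred, Nat.card_coe_set_eq, hset, Set.ncard_Iio_nat]
  rw [hcard, ← Set.mem_Iio, ← hset, Set.mem_ofPred_eq]

lemma pmult_ptrans_succ (hf : Antitone f) (hzero : ∃ N, f N = 0) (k : ℕ) :
    pmult (ptrans f) (k + 1) = f k - f (k + 1) := by
  have hset : {j | ptrans f j = k + 1} = Set.Ico (f (k + 1)) (f k) := by
    ext j
    have h₁ := lt_ptrans_iff_s6 hf hzero j k
    have h₂ := lt_ptrans_iff_s6 hf hzero j (k + 1)
    simp only [Set.mem_ofPred_eq, Set.mem_Ico]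
    omega
  rw [pmult, ← Set.coe_ofPred, Nat.card_coe_set_eq, hset, Set.ncard_Ico_nat]

end Transpose

/-- In the paper's 1-based indexing: `λ₁` is odd and `λ_{2i} ≡ λ_{2i+1} (mod 2)` for `i ≥ 1`. -/
structure OddPaired (f : ℕ → ℕ) : Prop where
  antitone : Antitone f
  head_odd : f 0 % 2 = 1
  paired : ∀ j, j % 2 = 1 → f j % 2 = f (j + 1) % 2

lemma sum_range_two_mul_add_one_mod_two {f : ℕ → ℕ}
    (hf : ∀ j, j % 2 = 1 → f j % 2 = f (j + 1) % 2) (n : ℕ) :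
    (∑ j ∈ range (2 * n + 1), f j) % 2 = f 0 % 2 := by
  induction n with
  | zero => simp
  | succ n ih =>
    have hpair : f (2 * n + 1) % 2 = f (2 * n + 2) % 2 := hf (2 * n + 1) (by omega)
    rw [show 2 * (n + 1) + 1 = 2 * n + 2 + 1 by ring, sum_range_succ, sum_range_succ]
    omega

lemma IsPartitionOf.oddPaired {f : ℕ → ℕ} {d : ℕ} (hp : IsPartitionOf f d) (hd : Odd d)
    (hs : IsOrthogonal (ptrans f)) : OddPaired f := by
  obtain ⟨hf, N, hN, hsum⟩ := hp
  have hzero : ∃ N, f N = 0 := ⟨N, hN N le_rfl⟩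
  have paired : ∀ j, j % 2 = 1 → f j % 2 = f (j + 1) % 2 := by
    intro j hj
    have heven := hs (j + 1) j.succ_pos (Nat.even_iff.mpr (by omega))
    rw [pmult_ptrans_succ hf hzero, Nat.even_sub (hf (Nat.le_succ j) : f (j + 1) ≤ f j),
      Nat.even_iff, Nat.even_iff] at heven
    omega
  refine ⟨hf, ?_, paired⟩
  have hsum' : ∑ j ∈ range (2 * N + 1), f j = d := by
    rw [← hsum, eq_comm]
    refine sum_subset (range_subset_range.mpr (by omega)) fun j _ hj => hN j ?_
    simpa using hj
  have := sum_range_two_mul_add_one_mod_two paired N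
  rw [Nat.odd_iff] at hd
  omega

namespace OddPaired

variable {f f' : ℕ → ℕ}

lemma sum_range_succ_mod_two (hf : OddPaired f) {M : ℕ} (hM : M % 2 = 1) :
    (∑ j ∈ range (M + 1), f j) % 2 = (1 + f M) % 2 := by
  obtain ⟨n, rfl⟩ : ∃ n, M = 2 * n + 1 := ⟨M / 2, by omega⟩
  rw [sum_range_succ]
  have := sum_range_two_mul_add_one_mod_two hf.paired n
  have := hf.head_odd
  omega

lemma mod_two_eq_of_sum_range_eq (hf : OddPaired f) (hf' : OddPaired f') {M : ℕ}
    (hM : M % 2 = 1) (hsum : ∑ j ∈ range (M + 1), f j = ∑ j ∈ range (M + 1), f' j) :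
    f' M % 2 = f M % 2 := by
  have := hf.sum_range_succ_mod_two hM
  have := hf'.sum_range_succ_mod_two hM
  omega

end OddPaired

lemma NDomLE.eq_of_sum_range_eq {f f' : ℕ → ℕ} (h : NDomLE f f') (hf' : Antitone f') {M : ℕ}
    (hsum : ∑ j ∈ range (M + 1), f j = ∑ j ∈ range (M + 1), f' j) (hM : f M = f (M + 1)) :
    f' M = f M ∧ f' (M + 1) = f M := by
  have hle := h M
  have hle₂ := h (M + 2)
  have hanti : f' (M + 1) ≤ f' M := hf' (Nat.le_succ M)
  simp only [sum_range_succ] at hsum hle₂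
  omega

def XiPrefixVanishes (f g : ℕ → ℕ) (n : ℕ) : Prop :=
  f n % 2 = 1 ∧ g n % 2 = 1 ∧ (n % 2 = 1 ∨ f n + g n = f (n + 1) + g (n + 1))

instance (f g : ℕ → ℕ) : DecidablePred (XiPrefixVanishes f g) := fun _ =>
  inferInstanceAs (Decidable (_ ∧ _ ∧ _))

lemma xiSeq_zero {f g : ℕ → ℕ} (hf : OddPaired f) (hg : OddPaired g) {d : ℕ} (hd : d % 2 = 1) :
    xiSeq f g 1 1 d 0 = if XiPrefixVanishes f g 0 then 0 else -1 := by
  have : f 1 ≤ f 0 := hf.antitone (Nat.zero_le 1)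
  have : g 1 ≤ g 0 := hg.antitone (Nat.zero_le 1)
  have := hf.head_odd
  have := hg.head_odd
  simp only [xiSeq, XiPrefixVanishes, Nat.zero_add, Nat.zero_mod, zero_ne_one, true_or, false_or,
    and_true]
  split_ifs <;> omega

lemma xiSeq_succ {f g : ℕ → ℕ} (hf : OddPaired f) (hg : OddPaired g) {d : ℕ} (hd : d % 2 = 1)
    (n : ℕ) :
    (if XiPrefixVanishes f g n then 0 else -1) + xiSeq f g 1 1 d (n + 1) =
      if XiPrefixVanishes f g (n + 1) then 0 else -1 := by
  have : f (n + 1) ≤ f n := hf.antitone (Nat.le_succ n)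
  have : g (n + 1) ≤ g n := hg.antitone (Nat.le_succ n)
  have : f (n + 2) ≤ f (n + 1) := hf.antitone (Nat.le_succ _)
  have : g (n + 2) ≤ g (n + 1) := hg.antitone (Nat.le_succ _)
  have := hf.paired n
  have := hg.paired n
  simp only [xiSeq, XiPrefixVanishes, Nat.add_sub_cancel, Nat.add_assoc, Nat.reduceAdd,
    Nat.add_one_ne_zero, false_or]
  split_ifs <;> omega

lemma sum_range_succ_xiSeq {f g : ℕ → ℕ} (hf : OddPaired f) (hg : OddPaired g) {d : ℕ}
    (hd : d % 2 = 1) (n : ℕ) :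
    ∑ j ∈ range (n + 1), xiSeq f g 1 1 d j = if XiPrefixVanishes f g n then 0 else -1 := by
  induction n with
  | zero => rw [sum_range_one, xiSeq_zero hf hg hd]
  | succ n ih => rw [sum_range_succ, ih, xiSeq_succ hf hg hd]

lemma sum_range_succ_wald {f g : ℕ → ℕ} (hf : OddPaired f) (hg : OddPaired g) {d : ℕ}
    (hd : d % 2 = 1) (n : ℕ) :
    ∑ j ∈ range (n + 1), wald f g 1 1 d j =
      ((∑ j ∈ range (n + 1), f j : ℕ) : ℤ) + ((∑ j ∈ range (n + 1), g j : ℕ) : ℤ) +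
        if XiPrefixVanishes f g n then 0 else -1 := by
  simp only [wald, sum_add_distrib, sum_range_succ_xiSeq hf hg hd, Nat.cast_sum]

lemma XiPrefixVanishes.of_dominates {f g f' g' : ℕ → ℕ} (hf : OddPaired f) (hg : OddPaired g)
    (hf' : OddPaired f') (hg' : OddPaired g') (h₁ : NDomLE f f') (h₂ : NDomLE g g') {M : ℕ}
    (hsum : ∑ j ∈ range (M + 1), f j + ∑ j ∈ range (M + 1), g j =
      ∑ j ∈ range (M + 1), f' j + ∑ j ∈ range (M + 1), g' j)
    (hz : XiPrefixVanishes f g M) : XiPrefixVanishes f' g' M := by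
  have hf_sum : ∑ j ∈ range (M + 1), f j = ∑ j ∈ range (M + 1), f' j := by
    have := h₁ (M + 1); have := h₂ (M + 1); omega
  have hg_sum : ∑ j ∈ range (M + 1), g j = ∑ j ∈ range (M + 1), g' j := by
    have := h₁ (M + 1); have := h₂ (M + 1); omega
  obtain ⟨hfM, hgM, hM | hM⟩ := hz
  · have := hf.mod_two_eq_of_sum_range_eq hf' hM hf_sum
    have := hg.mod_two_eq_of_sum_range_eq hg' hM hg_sum
    exact ⟨by omega, by omega, Or.inl hM⟩
  · have : f (M + 1) ≤ f M := hf.antitone (Nat.le_succ M)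
    have : g (M + 1) ≤ g M := hg.antitone (Nat.le_succ M)
    obtain ⟨hf'M, hf'M₁⟩ := h₁.eq_of_sum_range_eq hf'.antitone hf_sum (by omega)
    obtain ⟨hg'M, hg'M₁⟩ := h₂.eq_of_sum_range_eq hg'.antitone hg_sum (by omega)
    exact ⟨by omega, by omega, Or.inr (by omega)⟩

theorem stmt6_general (d1 d2 : ℕ) (hd1 : Odd d1) (hd2 : Odd d2)
    (lam1 lam1' lam2 lam2' : ℕ → ℕ)
    (h1 : IsPartitionOf lam1 d1)
    (h1s : IsOrthogonal (ptrans lam1))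
    (h1' : IsPartitionOf lam1' d1)
    (h1s' : IsOrthogonal (ptrans lam1'))
    (h2 : IsPartitionOf lam2 d2)
    (h2s : IsOrthogonal (ptrans lam2))
    (h2' : IsPartitionOf lam2' d2)
    (h2s' : IsOrthogonal (ptrans lam2'))
    (hle1 : NDomLE lam1 lam1') (hle2 : NDomLE lam2 lam2') :
    DomLE (wald lam1 lam2 1 1 (d1+d2-1)) (wald lam1' lam2' 1 1 (d1+d2-1)) := by
  have hd : (d1 + d2 - 1) % 2 = 1 := by
    obtain ⟨a, rfl⟩ := hd1
    obtain ⟨b, rfl⟩ := hd2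
    omega
  have hp1 := h1.oddPaired hd1 h1s
  have hp1' := h1'.oddPaired hd1 h1s'
  have hp2 := h2.oddPaired hd2 h2s
  have hp2' := h2'.oddPaired hd2 h2s'
  rintro (_ | M)
  · simp
  rw [sum_range_succ_wald hp1 hp2 hd, sum_range_succ_wald hp1' hp2' hd]
  have hle := add_le_add (hle1 (M + 1)) (hle2 (M + 1))
  -- the ξ-corrections lie in {-1, 0}, so only equal partial sums of `λ₁ + λ₂` need care
  split_ifs with hz hz' hz'
  · omega
  · have hne := mt (hz.of_dominates hp1 hp2 hp1' hp2' hle1 hle2) hz'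
    omega
  all_goals omega

/-- type B monotonicity.  `d₁, d₂` odd, `d = d₁+d₂−1`; `λ₁ ≤ λ₁'` and
`λ₂ ≤ λ₂'` special orthogonal partitions imply `W(λ₁,λ₂) ≤ W(λ₁',λ₂')` (ε₁=ε₂=1). -/
theorem stmt6 (d1 d2 : ℕ) (hd1 : Odd d1) (hd2 : Odd d2)
    (lam1 lam1' lam2 lam2' : ℕ → ℕ)
    (h1 : IsPartitionOf lam1 d1) (h1o : IsOrthogonal lam1)
    (h1s : IsOrthogonal (ptrans lam1))
    (h1' : IsPartitionOf lam1' d1) (h1o' : IsOrthogonal lam1')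
    (h1s' : IsOrthogonal (ptrans lam1'))
    (h2 : IsPartitionOf lam2 d2) (h2o : IsOrthogonal lam2)
    (h2s : IsOrthogonal (ptrans lam2))
    (h2' : IsPartitionOf lam2' d2) (h2o' : IsOrthogonal lam2')
    (h2s' : IsOrthogonal (ptrans lam2'))
    (hle1 : NDomLE lam1 lam1') (hle2 : NDomLE lam2 lam2') :
    DomLE (wald lam1 lam2 1 1 (d1+d2-1)) (wald lam1' lam2' 1 1 (d1+d2-1)) :=
  stmt6_general d1 d2 hd1 hd2 lam1 lam1' lam2 lam2' h1 h1s h1' h1s' h2 h2s h2' h2s' hle1 hle2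
end

section
/- Let α×β = (a_0,…,a_k)×(b_1,…,b_k) and α'×β' = (a'_0,…,a'_k)×(b'_1,…,b'_k) be special B/C-bipartitions of n and n' respectively. Let J = {1 ≤ i ≤ k : b_i = a_i+1 and b'_i = a'_i+1}. Define c_0 = a_0+a'_0 and, for 1 ≤ i ≤ k, (c_i, d_i) = (a_i+a'_i+1, b_i+b'_i−1) if i ∈ J and (c_i, d_i) = (a_i+a'_i, b_i+b'_i) otherwise. Then (c_0,…,c_k)×(d_1,…,d_k) is a special B/C-bipartition of n+n' (in particular the c-tuple and the d-tuple are weakly increasing), its symbol-entry multiset equals the symbol-entry multiset of (α+α')×(β+β'), and it is the unique special B/C-bipartition with parameter k having that symbol-entry multiset. -/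
/-- A B/C-bipartition of `n` with parameter `k ≥ 1`: `a = (a₀,…,a_k)`, `b = (b₁,…,b_k)`
weakly increasing, with total sum `n`.  We encode `a b : ℕ → ℕ`, only indices `≤ k`
matter, and we fix the convention `b 0 = 0`. -/
def IsBip (k n : ℕ) (a b : ℕ → ℕ) : Prop :=
  1 ≤ k ∧ b 0 = 0 ∧ (∀ i, i < k → a i ≤ a (i+1)) ∧
    (∀ i, 1 ≤ i → i < k → b i ≤ b (i+1)) ∧
    (∑ i ∈ Finset.range (k+1), a i) + (∑ i ∈ Finset.Icc 1 k, b i) = n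

/-- The order on B/C-bipartitions: for all `0 ≤ i ≤ k`,
`Σ_{j=i}^k (a_j+b_j) ≤ Σ_{j=i}^k (p_j+q_j)` and
`Σ_{j=i}^k a_j + Σ_{j=i+1}^k b_j ≤ Σ_{j=i}^k p_j + Σ_{j=i+1}^k q_j`
(convention `b 0 = q 0 = 0`). -/
def BipLE (k : ℕ) (a b p q : ℕ → ℕ) : Prop :=
  ∀ i, i ≤ k →
    ((∑ j ∈ Finset.Icc i k, (a j + b j)) ≤ ∑ j ∈ Finset.Icc i k, (p j + q j)) ∧
    ((∑ j ∈ Finset.Icc i k, a j) + ∑ j ∈ Finset.Icc (i+1) k, b j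
      ≤ (∑ j ∈ Finset.Icc i k, p j) + ∑ j ∈ Finset.Icc (i+1) k, q j)

/-- The symbol-entry multiset of a B/C-bipartition:
`{a_i + i : 0 ≤ i ≤ k} ∪ {b_i + (i−1) : 1 ≤ i ≤ k}`. -/
def symbolMS (k : ℕ) (a b : ℕ → ℕ) : Multiset ℕ :=
  (Finset.range (k+1)).val.map (fun i => a i + i)
    + (Finset.Icc 1 k).val.map (fun i => b i + (i - 1))

/-- Special B/C-bipartition: `a_{i−1} ≤ b_i ≤ a_i + 1` for all `1 ≤ i ≤ k`. -/
def IsSpecialBip (k : ℕ) (a b : ℕ → ℕ) : Prop :=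
  ∀ i, 1 ≤ i → i ≤ k → a (i-1) ≤ b i ∧ b i ≤ a i + 1

/-- The `c`-tuple of Statement 10: `c₀ = a₀+a'₀` and, for `i ≥ 1`,
`c_i = a_i+a'_i+1` if `i ∈ J` (i.e. `b_i = a_i+1` and `b'_i = a'_i+1`), else `a_i+a'_i`. -/
def mergeC (a b a' b' : ℕ → ℕ) : ℕ → ℕ := fun i =>
  if i ≠ 0 ∧ b i = a i + 1 ∧ b' i = a' i + 1 then a i + a' i + 1 else a i + a' i

/-- The `d`-tuple of Statement 10: for `i ≥ 1`,
`d_i = b_i+b'_i−1` if `i ∈ J`, else `b_i+b'_i` (and `d₀ = 0`). -/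
def mergeD (a b a' b' : ℕ → ℕ) : ℕ → ℕ := fun i =>
  if i ≠ 0 ∧ b i = a i + 1 ∧ b' i = a' i + 1 then b i + b' i - 1 else b i + b' i

/-!
Write `A = a + a'` and `B = b + b'`. Specialness of both summands gives `B_i ≤ A_i + 2`, with
equality exactly for `i ∈ J`; hence `c_i = max A_i (B_i - 1)` and `d_i = min B_i (A_i + 1)`,
which are monotone and special, and `{c_i + i, d_i + i - 1} = {A_i + i, B_i + i - 1}` index by
index. For uniqueness: the symbol of a special bipartition, listed as
`a₀, b₁, a₁ + 1, b₂ + 1, a₂ + 2, …`, is weakly increasing, so it is the sorted symbol, and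
it determines the bipartition.
-/

def symbolSeq (a b : ℕ → ℕ) (j : ℕ) : ℕ :=
  if j % 2 = 0 then a (j / 2) + j / 2 else b (j / 2 + 1) + j / 2

section Symbol

variable {k : ℕ} {a b : ℕ → ℕ}

lemma symbolSeq_two_mul (a b : ℕ → ℕ) (i : ℕ) : symbolSeq a b (2 * i) = a i + i := by
  simp [symbolSeq]

lemma symbolSeq_two_mul_add_one (a b : ℕ → ℕ) (i : ℕ) :
    symbolSeq a b (2 * i + 1) = b (i + 1) + i := by
  simp [symbolSeq, Nat.add_mod, Nat.add_div]

lemma symbolMS_eq_add_sum_pair (k : ℕ) (a b : ℕ → ℕ) :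
    symbolMS k a b
      = {a 0} + ∑ i ∈ Finset.Icc 1 k, ({a i + i, b i + (i - 1)} : Multiset ℕ) := by
  have hrange : Finset.range (k + 1) = insert 0 (Finset.Icc 1 k) := by
    ext i; simp only [Finset.mem_range, Finset.mem_insert, Finset.mem_Icc]; omega
  have hpairs : ∑ i ∈ Finset.Icc 1 k, ({a i + i, b i + (i - 1)} : Multiset ℕ)
      = (Finset.Icc 1 k).val.map (fun i => a i + i)
        + (Finset.Icc 1 k).val.map (fun i => b i + (i - 1)) := by
    rw [← Multiset.bind_singleton, ← Multiset.bind_singleton, ← Multiset.bind_add]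
    rfl
  rw [hpairs, symbolMS, hrange, Finset.insert_val_of_notMem (by simp), Multiset.map_cons,
    Multiset.singleton_add, Multiset.cons_add, add_zero]

lemma symbolMS_eq_map_symbolSeq (k : ℕ) (a b : ℕ → ℕ) :
    symbolMS k a b = ((List.range (2 * k + 1)).map (symbolSeq a b) : Multiset ℕ) := by
  induction k with
  | zero => simp [symbolMS, symbolSeq]
  | succ k ih =>
    have hrange : List.range (2 * (k + 1) + 1)
        = List.range (2 * k + 1) ++ [2 * k + 1, 2 * (k + 1)] := by
      rw [show 2 * (k + 1) + 1 = 2 * k + 1 + 1 + 1 by ring, List.range_succ, List.range_succ]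
      simp only [List.append_assoc, List.cons_append, List.nil_append]
      ring_nf
    rw [symbolMS_eq_add_sum_pair] at ih ⊢
    rw [Finset.sum_Icc_succ_top (by omega), ← add_assoc, ih, hrange, List.map_append,
      ← Multiset.coe_add]
    simp only [List.map_cons, List.map_nil, symbolSeq_two_mul, symbolSeq_two_mul_add_one,
      Nat.add_sub_cancel]
    rw [Multiset.pair_comm]
    rfl

lemma sum_eq_of_symbolMS_eq {c d : ℕ → ℕ} (h : symbolMS k a b = symbolMS k c d) :
    ∑ i ∈ Finset.range (k + 1), a i + ∑ i ∈ Finset.Icc 1 k, b i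
      = ∑ i ∈ Finset.range (k + 1), c i + ∑ i ∈ Finset.Icc 1 k, d i := by
  have := congrArg Multiset.sum h
  simp only [symbolMS, Multiset.sum_add, ← Finset.sum_eq_multiset_sum,
    Finset.sum_add_distrib] at this
  omega

lemma IsSpecialBip.symbolSeq_le_succ (hs : IsSpecialBip k a b) {j : ℕ} (hj : j < 2 * k) :
    symbolSeq a b j ≤ symbolSeq a b (j + 1) := by
  obtain ⟨i, rfl | rfl⟩ := Nat.even_or_odd' j
  · have := (hs (i + 1) (by omega) (by omega)).1
    simp only [symbolSeq_two_mul, symbolSeq_two_mul_add_one, Nat.add_sub_cancel] at this ⊢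
    omega
  · have := (hs (i + 1) (by omega) (by omega)).2
    rw [show 2 * i + 1 + 1 = 2 * (i + 1) by ring]
    simp only [symbolSeq_two_mul, symbolSeq_two_mul_add_one]
    omega

lemma IsSpecialBip.pairwise_symbolSeq (hs : IsSpecialBip k a b) :
    ((List.range (2 * k + 1)).map (symbolSeq a b)).Pairwise (· ≤ ·) := by
  rw [← List.isChain_iff_pairwise, List.isChain_map, List.isChain_range_succ]
  exact fun j hj => hs.symbolSeq_le_succ hj

theorem IsSpecialBip.eq_of_symbolMS_eq {c d : ℕ → ℕ} (hs : IsSpecialBip k a b)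
    (hs' : IsSpecialBip k c d) (h : symbolMS k a b = symbolMS k c d) :
    (∀ i, i ≤ k → a i = c i) ∧ (∀ i, 1 ≤ i → i ≤ k → b i = d i) := by
  rw [symbolMS_eq_map_symbolSeq, symbolMS_eq_map_symbolSeq, Multiset.coe_eq_coe] at h
  have hseq := List.map_eq_map_iff.mp
    (h.eq_of_pairwise' hs.pairwise_symbolSeq hs'.pairwise_symbolSeq)
  refine ⟨fun i hi => ?_, fun i hi hik => ?_⟩
  · have := hseq (2 * i) (by simp; omega)
    simp only [symbolSeq_two_mul] at this
    omega
  · have := hseq (2 * (i - 1) + 1) (by simp; omega)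
    simp only [symbolSeq_two_mul_add_one, Nat.sub_add_cancel hi] at this
    omega

end Symbol

section Merge

variable {k n n' : ℕ} {a b a' b' : ℕ → ℕ}

lemma symbolMS_merge (hs : IsSpecialBip k a b) (hs' : IsSpecialBip k a' b') :
    symbolMS k (mergeC a b a' b') (mergeD a b a' b')
      = symbolMS k (fun i => a i + a' i) (fun i => b i + b' i) := by
  rw [symbolMS_eq_add_sum_pair, symbolMS_eq_add_sum_pair]
  refine congrArg₂ _ (by simp [mergeC]) (Finset.sum_congr rfl fun i hi => ?_)
  obtain ⟨hi1, hik⟩ := Finset.mem_Icc.mp hi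
  have := hs i hi1 hik
  have := hs' i hi1 hik
  unfold mergeC mergeD
  split_ifs with hJ
  · have hc : a i + a' i + 1 + i = b i + b' i + (i - 1) := by omega
    have hd : b i + b' i - 1 + (i - 1) = a i + a' i + i := by omega
    rw [hc, hd, Multiset.pair_comm]
  · rfl

lemma mergeC_eq_max (hb0 : b 0 = 0) (hb0' : b' 0 = 0) (hs : IsSpecialBip k a b)
    (hs' : IsSpecialBip k a' b') {i : ℕ} (hi : i ≤ k) :
    mergeC a b a' b' i = max (a i + a' i) (b i + b' i - 1) := by
  rcases Nat.eq_zero_or_pos i with rfl | hi1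
  · simp [mergeC, hb0, hb0']
  · have := hs i hi1 hi
    have := hs' i hi1 hi
    unfold mergeC
    split_ifs <;> omega

lemma mergeD_eq_min (hs : IsSpecialBip k a b) (hs' : IsSpecialBip k a' b')
    {i : ℕ} (hi1 : 1 ≤ i) (hi : i ≤ k) :
    mergeD a b a' b' i = min (b i + b' i) (a i + a' i + 1) := by
  have := hs i hi1 hi
  have := hs' i hi1 hi
  unfold mergeD
  split_ifs <;> omega

lemma IsBip.snd_le_succ (h : IsBip k n a b) {i : ℕ} (hi : i < k) : b i ≤ b (i + 1) := by
  obtain ⟨-, hb0, -, hb, -⟩ := h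
  rcases Nat.eq_zero_or_pos i with rfl | hi1
  · simp [hb0]
  · exact hb i hi1 hi

lemma IsSpecialBip.snd_le_fst_add_one (hb0 : b 0 = 0) (hs : IsSpecialBip k a b) {i : ℕ}
    (hi : i ≤ k) : b i ≤ a i + 1 := by
  rcases Nat.eq_zero_or_pos i with rfl | hi1
  · simp [hb0]
  · exact (hs i hi1 hi).2

lemma mergeC_le_succ (h1 : IsBip k n a b) (hs : IsSpecialBip k a b) (h2 : IsBip k n' a' b')
    (hs' : IsSpecialBip k a' b') {i : ℕ} (hi : i < k) :
    mergeC a b a' b' i ≤ mergeC a b a' b' (i + 1) := by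
  rw [mergeC_eq_max h1.2.1 h2.2.1 hs hs' hi.le,
    mergeC_eq_max h1.2.1 h2.2.1 hs hs' (i := i + 1) hi]
  have := h1.2.2.1 i hi
  have := h2.2.2.1 i hi
  have := h1.snd_le_succ hi
  have := h2.snd_le_succ hi
  omega

lemma mergeD_le_succ (h1 : IsBip k n a b) (hs : IsSpecialBip k a b) (h2 : IsBip k n' a' b')
    (hs' : IsSpecialBip k a' b') {i : ℕ} (hi1 : 1 ≤ i) (hi : i < k) :
    mergeD a b a' b' i ≤ mergeD a b a' b' (i + 1) := by
  rw [mergeD_eq_min hs hs' hi1 hi.le, mergeD_eq_min hs hs' (i := i + 1) (by omega) hi]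
  have := h1.2.2.1 i hi
  have := h2.2.2.1 i hi
  have := h1.snd_le_succ hi
  have := h2.snd_le_succ hi
  omega

lemma isSpecialBip_merge (h1 : IsBip k n a b) (hs : IsSpecialBip k a b)
    (h2 : IsBip k n' a' b') (hs' : IsSpecialBip k a' b') :
    IsSpecialBip k (mergeC a b a' b') (mergeD a b a' b') := by
  intro i hi1 hi
  obtain ⟨m, rfl⟩ : ∃ m, i = m + 1 := ⟨i - 1, by omega⟩
  rw [Nat.add_sub_cancel, mergeC_eq_max h1.2.1 h2.2.1 hs hs' (by omega),
    mergeC_eq_max h1.2.1 h2.2.1 hs hs' hi, mergeD_eq_min hs hs' hi1 hi]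
  have hspec := hs (m + 1) hi1 hi
  have hspec' := hs' (m + 1) hi1 hi
  rw [Nat.add_sub_cancel] at hspec hspec'
  have := h1.2.2.1 m hi
  have := h2.2.2.1 m hi
  have := h1.snd_le_succ hi
  have := h2.snd_le_succ hi
  have := hs.snd_le_fst_add_one h1.2.1 (i := m) (by omega)
  have := hs'.snd_le_fst_add_one h2.2.1 (i := m) (by omega)
  omega

lemma isBip_merge (h1 : IsBip k n a b) (hs : IsSpecialBip k a b)
    (h2 : IsBip k n' a' b') (hs' : IsSpecialBip k a' b') :
    IsBip k (n + n') (mergeC a b a' b') (mergeD a b a' b') := by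
  refine ⟨h1.1, by simp [mergeD, h1.2.1, h2.2.1], fun i hi => mergeC_le_succ h1 hs h2 hs' hi,
    fun i hi1 hi => mergeD_le_succ h1 hs h2 hs' hi1 hi, ?_⟩
  rw [sum_eq_of_symbolMS_eq (symbolMS_merge hs hs'), Finset.sum_add_distrib,
    Finset.sum_add_distrib, ← h1.2.2.2.2, ← h2.2.2.2.2]
  ring

end Merge

/-- For special B/C-bipartitions `α×β` of `n` and `α'×β'` of `n'`, the
pair `(c,d)` defined via the set `J = {i : b_i = a_i+1 ∧ b'_i = a'_i+1}` is a special
B/C-bipartition of `n+n'`, its symbol-entry multiset equals that of `(α+α')×(β+β')`,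
and it is the unique special B/C-bipartition with parameter `k` having that
symbol-entry multiset. -/
theorem stmt10 (k n n' : ℕ) (a b a' b' : ℕ → ℕ)
    (h1 : IsBip k n a b) (h1s : IsSpecialBip k a b)
    (h2 : IsBip k n' a' b') (h2s : IsSpecialBip k a' b') :
    IsBip k (n+n') (mergeC a b a' b') (mergeD a b a' b') ∧
    IsSpecialBip k (mergeC a b a' b') (mergeD a b a' b') ∧
    symbolMS k (mergeC a b a' b') (mergeD a b a' b')
      = symbolMS k (fun i => a i + a' i) (fun i => b i + b' i) ∧
    ∀ c' d' : ℕ → ℕ, IsBip k (n+n') c' d' → IsSpecialBip k c' d' →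
      symbolMS k c' d' = symbolMS k (mergeC a b a' b') (mergeD a b a' b') →
      (∀ i, i ≤ k → c' i = mergeC a b a' b' i) ∧
      (∀ i, 1 ≤ i → i ≤ k → d' i = mergeD a b a' b' i) := by
  exact ⟨isBip_merge h1 h1s h2 h2s, isSpecialBip_merge h1 h1s h2 h2s, symbolMS_merge h1s h2s,
    fun _ _ _ hs h => hs.eq_of_symbolMS_eq (isSpecialBip_merge h1 h1s h2 h2s) h⟩
end

section
/- Let l ≥ 1 be odd and a_1, a_2 ≥ 1 be odd. For i ∈ {1,2} let λ_i be the partition consisting of l copies of a_i, a special orthogonal partition of d_i = a_i·l. Let W = W(λ_1,λ_2) be the Waldspurger sequence for the type B data with d = d_1+d_2−1. Then W consists of l−1 copies of a_1+a_2 followed by one copy of a_1+a_2−1, and if ν is a C-collapse of (W^t)^−, ν_1 is a C-collapse of (λ_1^t)^−, and ν_2 is a C-collapse of (λ_2^t)^−, then ν = ν_1 ∪ ν_2. -/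
/-- The partition consisting of `l` copies of `a`. -/
def rect (a l : ℕ) : ℕ → ℕ := fun j => if j < l then a else 0

/-- `l−1` copies of `a₁+a₂` followed by one copy of `a₁+a₂−1`. -/
def rectShape (a1 a2 l : ℕ) : ℕ → ℕ :=
  fun j => if j + 1 < l then a1 + a2 else if j + 1 = l then a1 + a2 - 1 else 0


/-!
The transposes of `λᵢ` and `W` have two blocks each. `(λᵢᵗ)⁻ = (l^(aᵢ-1), l-1)` is already
symplectic, hence its own C-collapse. `(Wᵗ)⁻ = (l^(a₁+a₂-1), l-2)` has the odd part `l` with odd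
multiplicity; moving one box of it down a row gives the symplectic `(l^(a₁+a₂-2), l-1, l-1)`, and
every symplectic partition below `(Wᵗ)⁻` lies below that one, because it cannot fill the first
`a₁+a₂-1` rows completely. Collapses are unique, and the two-block shapes add up:
`(l^(a₁-1), l-1) ∪ (l^(a₂-1), l-1) = (l^(a₁+a₂-2), l-1, l-1)`.
-/

open Finset

lemma card_subtype_eq_of_iff {p : ℕ → Prop} {a b : ℕ} (h : ∀ j, p j ↔ a ≤ j ∧ j < b) :
    Nat.card {j // p j} = b - a := by
  rw [Nat.card_congr (Equiv.subtypeEquivRight h), ← Set.ncard_Ico_nat]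
  exact Nat.card_coe_set_eq _

lemma IsPartitionOf.sum_range_le {f : ℕ → ℕ} {m : ℕ} (hf : IsPartitionOf f m) (N : ℕ) :
    ∑ j ∈ range N, f j ≤ m := by
  obtain ⟨-, N₀, hzero, rfl⟩ := hf
  rcases le_total N N₀ with hN | hN
  · exact sum_le_sum_of_subset (range_subset_range.2 hN)
  · rw [← sum_subset (range_subset_range.2 hN) fun j _ hj => hzero j (by simpa using hj)]

lemma IsCollapse.unique {P : (ℕ → ℕ) → Prop} {m : ℕ} {μ ν ν' : ℕ → ℕ}
    (h : IsCollapse P m μ ν) (h' : IsCollapse P m μ ν') : ν = ν' := by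
  have hle : NDomLE ν ν' := h'.2.2.2 ν h.1 h.2.1 h.2.2.1
  have hge : NDomLE ν' ν := h.2.2.2 ν' h'.1 h'.2.1 h'.2.2.1
  funext j
  have hj := le_antisymm (hle j) (hge j)
  have hj1 := le_antisymm (hle (j + 1)) (hge (j + 1))
  rw [sum_range_succ, sum_range_succ] at hj1
  omega

lemma isCollapse_self {P : (ℕ → ℕ) → Prop} {m : ℕ} {μ : ℕ → ℕ}
    (hμ : IsPartitionOf μ m) (hP : P μ) : IsCollapse P m μ μ :=
  ⟨hμ, hP, fun _ => le_rfl, fun _ _ _ h => h⟩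

/-- `f` is `g` with one box moved from row `i` down to row `i + 1`. -/
lemma sum_range_add_ite_eq_of_lower_box {f g : ℕ → ℕ} {i : ℕ} (hi : f i + 1 = g i)
    (hi' : f (i + 1) = g (i + 1) + 1) (hother : ∀ j, j ≠ i → j ≠ i + 1 → f j = g j) (N : ℕ) :
    ∑ j ∈ range N, f j + (if N = i + 1 then 1 else 0) = ∑ j ∈ range N, g j := by
  induction N with
  | zero => simp
  | succ N ih =>
    rw [sum_range_succ, sum_range_succ, ← ih]
    obtain rfl | hNi := eq_or_ne N i
    · split_ifs at ih ⊢ <;> omega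
    obtain rfl | hNi' := eq_or_ne N (i + 1)
    · split_ifs at ih ⊢ <;> omega
    rw [hother N hNi hNi']
    split_ifs at ih ⊢ <;> omega

lemma pmult_eq_of_sum_range_eq {σ : ℕ → ℕ} {l n : ℕ} (hσ : Antitone σ) (h0 : σ 0 ≤ l)
    (hsum : ∑ j ∈ range n, σ j = l * n) (hn : σ n < l) : pmult σ l = n := by
  have hle : ∀ j, σ j ≤ l := fun j => (hσ (Nat.zero_le j)).trans h0
  have heq : ∀ j ∈ range n, σ j = l := by
    refine (sum_eq_sum_iff_of_le fun j _ => hle j).1 ?_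
    rw [hsum, sum_const, card_range, smul_eq_mul, mul_comm]
  refine (card_subtype_eq_of_iff fun j => ⟨fun hj => ⟨j.zero_le, ?_⟩,
    fun hj => heq j (mem_range.2 hj.2)⟩).trans (Nat.sub_zero n)
  by_contra! hnj
  exact absurd (hσ hnj) (by omega)

def blocks (x n y m : ℕ) : ℕ → ℕ := fun j => if j < n then x else if j < n + m then y else 0

section Blocks

variable {x n y m : ℕ}

lemma blocks_antitone (hyx : y ≤ x) : Antitone (blocks x n y m) := fun i j hij => by
  simp only [blocks]; split_ifs <;> omega

lemma blocks_eq_zero_of_le {j : ℕ} (hj : n + m ≤ j) : blocks x n y m j = 0 := by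
  simp only [blocks]; split_ifs <;> omega

lemma sum_range_blocks_of_le {N : ℕ} (hN : N ≤ n) : ∑ j ∈ range N, blocks x n y m j = x * N := by
  have hhead : ∀ j ∈ range N, blocks x n y m j = x := fun j hj =>
    if_pos ((mem_range.1 hj).trans_le hN)
  rw [sum_congr rfl hhead, sum_const, card_range, smul_eq_mul, mul_comm]

lemma isPartitionOf_blocks (hyx : y ≤ x) : IsPartitionOf (blocks x n y m) (x * n + y * m) := by
  have htail : ∀ j ∈ range m, blocks x n y m (n + j) = y := fun j hj => by
    have := mem_range.1 hj
    simp only [blocks]; split_ifs <;> omega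
  refine ⟨blocks_antitone hyx, n + m, fun j => blocks_eq_zero_of_le, ?_⟩
  rw [sum_range_add, sum_range_blocks_of_le le_rfl, sum_congr rfl htail, sum_const, card_range,
    smul_eq_mul, mul_comm m]

lemma pmult_blocks {k : ℕ} (hk : 0 < k) :
    pmult (blocks x n y m) k = (if x = k then n else 0) + (if y = k then m else 0) := by
  rw [pmult]
  by_cases hx : x = k <;> by_cases hy : y = k <;> simp only [hx, hy, if_true, if_false]
  · exact card_subtype_eq_of_iff (a := 0) (b := n + m) fun j => by
      simp only [blocks]; split_ifs <;> omega
  · exact card_subtype_eq_of_iff (a := 0) (b := n) fun j => by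
      simp only [blocks]; split_ifs <;> omega
  · exact (card_subtype_eq_of_iff (a := n) (b := n + m) fun j => by
      simp only [blocks]; split_ifs <;> omega).trans (by omega)
  · exact card_subtype_eq_of_iff (a := 0) (b := 0) fun j => by
      simp only [blocks]; split_ifs <;> omega

lemma isSymplectic_blocks (hn : Even n) (hy : Even y) : IsSymplectic (blocks x n y m) := by
  intro k hk hkodd
  have hyk : y ≠ k := fun h => Nat.not_even_iff_odd.2 hkodd (h ▸ hy)
  rw [pmult_blocks hk, if_neg hyk, add_zero]
  split_ifs
  exacts [hn, .zero]

lemma ptrans_blocks (hyx : y ≤ x) : ptrans (blocks x n y m) = blocks (n + m) y n (x - y) := by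
  funext k
  unfold ptrans
  by_cases hky : k < y
  · refine (card_subtype_eq_of_iff (a := 0) (b := n + m) fun j => ?_).trans ?_ <;>
      simp only [blocks] <;> split_ifs <;> omega
  by_cases hkx : k < x
  · refine (card_subtype_eq_of_iff (a := 0) (b := n) fun j => ?_).trans ?_ <;>
      simp only [blocks] <;> split_ifs <;> omega
  · refine (card_subtype_eq_of_iff (a := 0) (b := 0) fun j => ?_).trans ?_ <;>
      simp only [blocks] <;> split_ifs <;> omega

lemma minusOne_blocks (hy : 0 < y) : minusOne (blocks x n y 1) = blocks x n (y - 1) 1 := by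
  funext j; simp only [minusOne, blocks]; split_ifs <;> omega

lemma isUnionOf_blocks {n₁ m₁ n₂ m₂ : ℕ} (hyx : y ≤ x) :
    IsUnionOf (blocks x (n₁ + n₂) y (m₁ + m₂)) (blocks x n₁ y m₁) (blocks x n₂ y m₂) := by
  refine ⟨blocks_antitone hyx, ⟨_, fun j => blocks_eq_zero_of_le⟩, fun k hk => ?_⟩
  simp only [pmult_blocks hk]
  split_ifs <;> ring

end Blocks

/-- A symplectic `σ ≤ (lⁿ, l - 2)` whose first `n` parts summed to `l * n` would have exactly
`n` parts equal to `l`, an odd number. -/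
lemma isCCollapse_blocks {l n : ℕ} (hl : Odd l) (hl3 : 3 ≤ l) (hn : Odd n) :
    IsCCollapse (l * n + (l - 2)) (blocks l n (l - 2) 1) (blocks l (n - 1) (l - 1) 2) := by
  have hn1 : 1 ≤ n := hn.pos
  have hbox := sum_range_add_ite_eq_of_lower_box (f := blocks l (n - 1) (l - 1) 2)
    (g := blocks l n (l - 2) 1) (i := n - 1) (by simp only [blocks]; split_ifs <;> omega)
    (by simp only [blocks]; split_ifs <;> omega)
    (fun j hj hj' => by simp only [blocks]; split_ifs <;> omega)
  rw [Nat.sub_add_cancel hn1] at hbox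
  have hsize : l * (n - 1) + (l - 1) * 2 = l * n + (l - 2) := by
    rw [Nat.mul_sub_one]
    have : l ≤ l * n := Nat.le_mul_of_pos_right l hn1
    omega
  refine ⟨hsize ▸ isPartitionOf_blocks (by omega),
    isSymplectic_blocks (Nat.Odd.sub_odd hn odd_one) (Nat.Odd.sub_odd hl odd_one),
    fun N => by have := hbox N; omega, fun σ hσ hσsymp hσμ N => ?_⟩
  have hN := hbox N
  have hσμN := hσμ N
  obtain rfl | hNn := eq_or_ne n N
  swap
  · rw [if_neg hNn.symm] at hN; omega
  rw [if_pos rfl] at hN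
  rw [sum_range_blocks_of_le le_rfl] at hN hσμN
  suffices hne : ∑ j ∈ range n, σ j ≠ l * n by omega
  intro hsum
  have hσ0 : σ 0 ≤ l := by
    simpa [blocks, show 0 < n from hn1] using hσμ 1
  have hσn : σ n < l := by
    have := hσ.sum_range_le (n + 1)
    rw [sum_range_succ, hsum] at this
    omega
  have hmult := pmult_eq_of_sum_range_eq hσ.1 hσ0 hsum hσn
  exact Nat.not_even_iff_odd.2 hn (hmult ▸ hσsymp l hl.pos hl)

lemma ptrans_rect (a l : ℕ) : ptrans (rect a l) = rect l a := by
  funext k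
  refine (card_subtype_eq_of_iff (a := 0) (b := rect l a k) fun j => ?_).trans (Nat.sub_zero _)
  simp only [rect]; split_ifs <;> omega

lemma isPartitionOf_rect (a l : ℕ) : IsPartitionOf (rect a l) (a * l) := by
  refine ⟨fun i j hij => by simp only [rect]; split_ifs <;> omega, l,
    fun j hj => if_neg (by omega), ?_⟩
  have hrow : ∀ j ∈ range l, rect a l j = a := fun j hj => if_pos (mem_range.1 hj)
  rw [sum_congr rfl hrow, sum_const, card_range, smul_eq_mul, mul_comm]

lemma isOrthogonal_rect {a : ℕ} (l : ℕ) (ha : Odd a) : IsOrthogonal (rect a l) := by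
  intro k hk hkeven
  rw [pmult, card_subtype_eq_of_iff (a := 0) (b := 0) fun j => ?_]
  · exact .zero
  have : a ≠ k := fun h => Nat.not_even_iff_odd.2 ha (h ▸ hkeven)
  simp only [rect]; split_ifs <;> omega

lemma rect_eq_blocks {x a : ℕ} (ha : 1 ≤ a) : rect x a = blocks x (a - 1) x 1 := by
  funext j; simp only [rect, blocks]; split_ifs <;> omega

lemma rectShape_eq_blocks {a₁ a₂ l : ℕ} (hl : 1 ≤ l) :
    rectShape a₁ a₂ l = blocks (a₁ + a₂) (l - 1) (a₁ + a₂ - 1) 1 := by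
  funext j; simp only [rectShape, blocks]; split_ifs <;> omega

lemma wald_rect_rect {a₁ a₂ l : ℕ} (hl : Odd l) (ha₁ : Odd a₁) (ha₂ : Odd a₂) (j : ℕ) :
    (rectShape a₁ a₂ l j : ℤ) = wald (rect a₁ l) (rect a₂ l) 1 1 (a₁ * l + a₂ * l - 1) j := by
  have hd : (a₁ * l + a₂ * l - 1) % 2 = 1 := by
    obtain ⟨p, hp⟩ := ha₁.mul hl
    obtain ⟨q, hq⟩ := ha₂.mul hl
    omega
  obtain ⟨m₁, rfl⟩ := ha₁
  obtain ⟨m₂, rfl⟩ := ha₂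
  obtain ⟨k, rfl⟩ := hl
  generalize (2 * m₁ + 1) * (2 * k + 1) + (2 * m₂ + 1) * (2 * k + 1) - 1 = d at hd
  simp only [wald, xiSeq, rect, rectShape]
  split_ifs <;> first | omega | tauto

lemma isCCollapse_minusOne_ptrans_rect {a l : ℕ} (hl : Odd l) (ha : Odd a) :
    IsCCollapse (a * l - 1) (minusOne (ptrans (rect a l))) (blocks l (a - 1) (l - 1) 1) := by
  rw [ptrans_rect, rect_eq_blocks ha.pos, minusOne_blocks hl.pos]
  have hsize : l * (a - 1) + (l - 1) * 1 = a * l - 1 := by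
    have h₁ : l * (a - 1) = a * l - l := by rw [Nat.mul_sub_one, mul_comm]
    have h₂ : l ≤ a * l := Nat.le_mul_of_pos_left l ha.pos
    have h₃ : 1 ≤ l := hl.pos
    omega
  exact isCollapse_self (hsize ▸ isPartitionOf_blocks (Nat.sub_le l 1))
    (isSymplectic_blocks (Nat.Odd.sub_odd ha odd_one) (Nat.Odd.sub_odd hl odd_one))

lemma isCCollapse_minusOne_ptrans_rectShape {a₁ a₂ l : ℕ} (hl : Odd l) (ha₁ : Odd a₁)
    (ha₂ : Odd a₂) :
    IsCCollapse (a₁ * l + a₂ * l - 2) (minusOne (ptrans (rectShape a₁ a₂ l)))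
      (blocks l (a₁ + a₂ - 2) (l - 1) 2) := by
  have hs : 2 ≤ a₁ + a₂ := by have := ha₁.pos; have := ha₂.pos; omega
  obtain ⟨n, hn, hsn⟩ : ∃ n, Odd n ∧ a₁ + a₂ = n + 1 :=
    ⟨a₁ + a₂ - 1, by rw [Nat.odd_iff] at *; omega, by omega⟩
  have hW : ptrans (rectShape a₁ a₂ l) = blocks l n (l - 1) 1 := by
    rw [rectShape_eq_blocks hl.pos, ptrans_blocks (Nat.sub_le _ _), Nat.sub_add_cancel hl.pos,
      Nat.sub_sub_self (by omega : 1 ≤ a₁ + a₂), hsn, Nat.add_sub_cancel]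
  have hsize : a₁ * l + a₂ * l = l * n + l := by rw [← add_mul, hsn, add_one_mul, mul_comm]
  rw [hW, hsize, show a₁ + a₂ - 2 = n - 1 by omega]
  -- for `l = 1` there is no part `l - 2`, and `(Wᵗ)⁻ = (1^(n-1))` is already symplectic
  obtain rfl | hl3 : l = 1 ∨ 3 ≤ l := by obtain ⟨k, rfl⟩ := hl; omega
  · have hminus : minusOne (blocks 1 n (1 - 1) 1) = blocks 1 (n - 1) (1 - 1) 2 := by
      have := hn.pos
      funext j; simp only [minusOne, blocks]; split_ifs <;> first | omega | simp_all
    rw [hminus]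
    have hsize₁ : 1 * n + 1 - 2 = 1 * (n - 1) + (1 - 1) * 2 := by have := hn.pos; omega
    exact isCollapse_self (hsize₁ ▸ isPartitionOf_blocks (Nat.sub_le 1 1))
      (isSymplectic_blocks (Nat.Odd.sub_odd hn odd_one) .zero)
  · rw [minusOne_blocks (by omega), show l - 1 - 1 = l - 2 by omega,
      show l * n + l - 2 = l * n + (l - 2) by omega]
    exact isCCollapse_blocks hl hl3 hn

theorem stmt11_general (l a1 a2 : ℕ) (hl : Odd l)
    (ha1 : Odd a1) (ha2 : Odd a2) :
    (IsPartitionOf (rect a1 l) (a1*l) ∧ IsOrthogonal (rect a1 l) ∧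
      IsOrthogonal (ptrans (rect a1 l))) ∧
    (IsPartitionOf (rect a2 l) (a2*l) ∧ IsOrthogonal (rect a2 l) ∧
      IsOrthogonal (ptrans (rect a2 l))) ∧
    (∀ j, (rectShape a1 a2 l j : ℤ)
        = wald (rect a1 l) (rect a2 l) 1 1 (a1*l + a2*l - 1) j) ∧
    ∀ ν ν1 ν2 : ℕ → ℕ,
      IsCCollapse (a1*l + a2*l - 2) (minusOne (ptrans (rectShape a1 a2 l))) ν →
      IsCCollapse (a1*l - 1) (minusOne (ptrans (rect a1 l))) ν1 →
      IsCCollapse (a2*l - 1) (minusOne (ptrans (rect a2 l))) ν2 →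
      IsUnionOf ν ν1 ν2 := by
  refine ⟨⟨isPartitionOf_rect a1 l, isOrthogonal_rect l ha1,
      ptrans_rect a1 l ▸ isOrthogonal_rect a1 hl⟩,
    ⟨isPartitionOf_rect a2 l, isOrthogonal_rect l ha2,
      ptrans_rect a2 l ▸ isOrthogonal_rect a2 hl⟩,
    wald_rect_rect hl ha1 ha2, fun ν ν1 ν2 hν hν1 hν2 => ?_⟩
  rw [hν.unique (isCCollapse_minusOne_ptrans_rectShape hl ha1 ha2),
    hν1.unique (isCCollapse_minusOne_ptrans_rect hl ha1),
    hν2.unique (isCCollapse_minusOne_ptrans_rect hl ha2),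
    show a1 + a2 - 2 = (a1 - 1) + (a2 - 1) by have := ha1.pos; have := ha2.pos; omega]
  exact isUnionOf_blocks (m₁ := 1) (m₂ := 1) (Nat.sub_le l 1)

/-- `l ≥ 1` odd, `a₁, a₂ ≥ 1` odd, `λᵢ = (aᵢ,…,aᵢ)` (`l` copies), a
special orthogonal partition of `dᵢ = aᵢ·l`.  Then `W = W(λ₁,λ₂)` (type B data,
`d = d₁+d₂−1`) consists of `l−1` copies of `a₁+a₂` followed by one copy of `a₁+a₂−1`,
and if `ν, ν₁, ν₂` are C-collapses of `(Wᵗ)⁻, (λ₁ᵗ)⁻, (λ₂ᵗ)⁻` then `ν = ν₁ ∪ ν₂`. -/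
theorem stmt11 (l a1 a2 : ℕ) (hl : Odd l) (hl1 : 1 ≤ l)
    (ha1 : Odd a1) (ha2 : Odd a2) (ha1' : 1 ≤ a1) (ha2' : 1 ≤ a2) :
    (IsPartitionOf (rect a1 l) (a1*l) ∧ IsOrthogonal (rect a1 l) ∧
      IsOrthogonal (ptrans (rect a1 l))) ∧
    (IsPartitionOf (rect a2 l) (a2*l) ∧ IsOrthogonal (rect a2 l) ∧
      IsOrthogonal (ptrans (rect a2 l))) ∧
    (∀ j, (rectShape a1 a2 l j : ℤ)
        = wald (rect a1 l) (rect a2 l) 1 1 (a1*l + a2*l - 1) j) ∧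
    ∀ ν ν1 ν2 : ℕ → ℕ,
      IsCCollapse (a1*l + a2*l - 2) (minusOne (ptrans (rectShape a1 a2 l))) ν →
      IsCCollapse (a1*l - 1) (minusOne (ptrans (rect a1 l))) ν1 →
      IsCCollapse (a2*l - 1) (minusOne (ptrans (rect a2 l))) ν2 →
      IsUnionOf ν ν1 ν2 :=
  stmt11_general l a1 a2 hl ha1 ha2
end
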